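/- Let m ≥ 2 and let A be a complex (m-1)×m matrix with det(A^{(k)}) ≠ 0 for k = 1, …, m-1 and det(Â^{(k)}) ≠ 0 for k = 1, …, m-1, where Â is the (m-1)×(m-1) matrix obtained from A by deleting its first column. Let K' be the (m-1)×m matrix with K' i i = 1 and K' i (i+1) = 1 for all i, and all other entries 0. Then there exist a unique complex lower triangular (m-1)×(m-1) matrix B and a unique complex upper triangular m×m matrix C whose (0,0) entry equals 1 and whose remaining first-row entries are 0, such that A = B · K' · C. -/

import Mathlib

open Matrix

/-- The `(m-1) × m` matrix `K'` with `K' i i = 1` and `K' i (i+1) = 1` for all `i`,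
and zeros elsewhere. -/
def modK' (m : ℕ) : Matrix (Fin (m - 1)) (Fin m) ℂ :=
  Matrix.of fun i j => if (j : ℕ) = (i : ℕ) ∨ (j : ℕ) = (i : ℕ) + 1 then 1 else 0

/-!
Write `C = diag(1, U)` and `L = B K̂`, where `K̂` (`K'` without its first column) is lower
bidiagonal with unit diagonal. Since `K̂ c = e₀` for `c = (1, -1, 1, …)`, the equation
`A = B K' C` says exactly that `Â = L U` and `L c = a`, the first column of `A`: an LU
factorization of `Â`, normalized by `L⁻¹ a = c`.

For a lower triangular `W`, the conditions "`W a = c` and `W Â` upper triangular" say that the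
first `i + 1` entries of row `i` of `W` solve `x A^(i+1) = cᵢ e₀`. As `A^(i+1)` is invertible,
they determine `W`; applied to `W = L⁻¹` this gives uniqueness. For existence, the `W` so
defined is invertible: if `Wᵢᵢ = 0`, the first `i` entries of row `i` form a vector that is
nonzero (its pairing with `a` is `cᵢ ≠ 0`) and annihilates `Â^(i)`.
-/

namespace ModifiedCholesky

section CommRing

variable {R : Type*} [CommRing R] {n : ℕ}

theorem isLowerTriangular_inv {M : Matrix (Fin n) (Fin n) R} (hM : M.IsLowerTriangular) :
    M⁻¹.IsLowerTriangular := by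
  by_cases h : IsUnit M.det
  · have := M.invertibleOfIsUnitDet h
    exact blockTriangular_inv_of_blockTriangular hM
  · rw [nonsing_inv_apply_not_isUnit _ h]
    exact blockTriangular_zero

theorem vecMul_eq_iff_eq_vecMul_inv {k : Type*} [Fintype k] [DecidableEq k]
    {N : Matrix k k R} (hN : IsUnit N.det) {x y : k → R} :
    x ᵥ* N = y ↔ x = y ᵥ* N⁻¹ := by
  constructor
  · rintro rfl
    rw [vecMul_vecMul, mul_nonsing_inv _ hN, vecMul_one]
  · rintro rfl
    rw [vecMul_vecMul, nonsing_inv_mul _ hN, vecMul_one]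

theorem dotProduct_eq_dotProduct_castLE {t : ℕ} (h : t ≤ n) {w : Fin n → R}
    (hw : ∀ k : Fin n, t ≤ k → w k = 0) (v : Fin n → R) :
    w ⬝ᵥ v = (w ∘ Fin.castLE h) ⬝ᵥ (v ∘ Fin.castLE h) := by
  refine (Fintype.sum_of_injective _ (Fin.castLE_injective h) _ _ (fun k hk => ?_)
    fun _ => rfl).symm
  rw [Fin.range_castLE, Set.mem_ofPred_eq, not_lt] at hk
  rw [hw k hk, zero_mul]

def blockDiagOne (U : Matrix (Fin n) (Fin n) R) : Matrix (Fin (n + 1)) (Fin (n + 1)) R :=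
  of (vecCons (Pi.single 0 1) fun i => vecCons 0 (U i))

theorem blockDiagOne_isUpperTriangular {U : Matrix (Fin n) (Fin n) R}
    (hU : U.IsUpperTriangular) : (blockDiagOne U).IsUpperTriangular := by
  intro i j (hji : j < i)
  induction i using Fin.cases with
  | zero => exact absurd hji (Fin.not_lt_zero j)
  | succ i =>
    induction j using Fin.cases with
    | zero => rfl
    | succ j => exact hU (Fin.succ_lt_succ_iff.mp hji)

theorem eq_blockDiagOne {C : Matrix (Fin (n + 1)) (Fin (n + 1)) R} (hC : C.IsUpperTriangular)
    (h00 : C 0 0 = 1) (h0 : ∀ j ≠ 0, C 0 j = 0) :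
    C = blockDiagOne (C.submatrix Fin.succ Fin.succ) := by
  ext i j
  induction i using Fin.cases with
  | zero =>
    by_cases hj : j = 0
    · subst hj; simpa [blockDiagOne] using h00
    · simpa [blockDiagOne, Pi.single_apply, hj] using h0 j hj
  | succ i =>
    induction j using Fin.cases with
    | zero => exact hC (Fin.succ_pos i)
    | succ j => rfl

theorem mul_blockDiagOne_apply_zero {m : Type*} (X : Matrix m (Fin (n + 1)) R)
    (U : Matrix (Fin n) (Fin n) R) (i : m) : (X * blockDiagOne U) i 0 = X i 0 := by
  simp [blockDiagOne, mul_apply, Fin.sum_univ_succ]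

theorem submatrix_mul_blockDiagOne {m : Type*} (X : Matrix m (Fin (n + 1)) R)
    (U : Matrix (Fin n) (Fin n) R) :
    (X * blockDiagOne U).submatrix id Fin.succ = X.submatrix id Fin.succ * U := by
  ext i j
  simp [blockDiagOne, mul_apply, Fin.sum_univ_succ]

end CommRing

section Field

variable {K : Type*} [Field K] {n : ℕ}

theorem det_ne_zero_of_isLowerTriangular {M : Matrix (Fin n) (Fin n) K}
    (hM : M.IsLowerTriangular) (hdiag : ∀ i, M i i ≠ 0) : M.det ≠ 0 := by
  rw [det_of_isLowerTriangular M hM]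
  exact Finset.prod_ne_zero_iff.mpr fun i _ => hdiag i

theorem diag_ne_zero_of_mulVec_eq {W M : Matrix (Fin n) (Fin n) K} {a c : Fin n → K}
    (hW : W.IsLowerTriangular) (hWa : W *ᵥ a = c) (hWM : (W * M).IsUpperTriangular)
    (i : Fin n) (hc : c i ≠ 0)
    (hM : (M.submatrix (Fin.castLE i.2.le) (Fin.castLE i.2.le)).det ≠ 0) : W i i ≠ 0 := by
  intro hii
  have hw : ∀ k : Fin n, (i : ℕ) ≤ k → W i k = 0 := fun k hk =>
    hk.eq_or_lt.elim (fun h => Fin.ext h ▸ hii) fun h => hW h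
  set x := W i ∘ Fin.castLE i.2.le
  have hx : x ≠ 0 := by
    intro hx
    have hxa : (W *ᵥ a) i = x ⬝ᵥ (a ∘ Fin.castLE i.2.le) :=
      dotProduct_eq_dotProduct_castLE i.2.le hw a
    rw [hWa, hx, zero_dotProduct] at hxa
    exact hc hxa
  refine hM (exists_vecMul_eq_zero_iff.mp ⟨x, hx, funext fun j => ?_⟩)
  rw [Pi.zero_apply, ← hWM (show Fin.castLE i.2.le j < i from j.2), mul_apply_eq_vecMul,
    vecMul, vecMul, dotProduct_eq_dotProduct_castLE i.2.le hw]
  rfl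

-- `leadingBlock A i` is the paper's `A^(i+1)`.
abbrev leadingBlock (A : Matrix (Fin n) (Fin (n + 1)) K) (i : Fin n) :
    Matrix (Fin (i + 1)) (Fin (i + 1)) K :=
  A.submatrix (Fin.castLE i.2) (Fin.castLE (by omega))

-- Row `i` solves `x ᵥ* A^(i+1) = c i • e₀`; this is the inverse of the lower factor.
noncomputable def lowerFactorInv (A : Matrix (Fin n) (Fin (n + 1)) K) (c : Fin n → K) :
    Matrix (Fin n) (Fin n) K :=
  of fun i j => if h : j ≤ i then
    (Pi.single 0 (c i) ᵥ* (leadingBlock A i)⁻¹) ⟨j, Nat.lt_succ_of_le h⟩ else 0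

variable {A : Matrix (Fin n) (Fin (n + 1)) K} {c : Fin n → K} {W : Matrix (Fin n) (Fin n) K}

theorem lowerFactorInv_isLowerTriangular : (lowerFactorInv A c).IsLowerTriangular :=
  fun i j (h : i < j) => dif_neg (not_le.mpr h)

theorem eq_lowerFactorInv_iff_forall_row (hW : W.IsLowerTriangular) :
    W = lowerFactorInv A c ↔
      ∀ i, W i ∘ Fin.castLE i.2 = Pi.single 0 (c i) ᵥ* (leadingBlock A i)⁻¹ := by
  constructor
  · rintro rfl i
    funext p
    exact dif_pos (Nat.le_of_lt_succ p.2)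
  · intro h
    ext i j
    by_cases hji : j ≤ i
    · rw [lowerFactorInv, of_apply, dif_pos hji]
      exact congrFun (h i) ⟨j, Nat.lt_succ_of_le hji⟩
    · exact (hW (not_le.mp hji : i < j)).trans
        (lowerFactorInv_isLowerTriangular (not_le.mp hji : i < j)).symm

theorem vecMul_leadingBlock (hW : W.IsLowerTriangular) (i : Fin n) :
    (W i ∘ Fin.castLE i.2) ᵥ* leadingBlock A i = fun j => (W * A) i (Fin.castLE (by omega) j) :=
  funext fun j => (dotProduct_eq_dotProduct_castLE i.2 (w := W i) (fun _ hk => hW hk)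
    fun k => A k (Fin.castLE (by omega) j)).symm

theorem mulVec_eq_and_isUpperTriangular_iff (hW : W.IsLowerTriangular) :
    (W *ᵥ (fun i => A i 0) = c ∧ (W * A.submatrix id Fin.succ).IsUpperTriangular) ↔
      ∀ i, (W i ∘ Fin.castLE i.2) ᵥ* leadingBlock A i = Pi.single 0 (c i) := by
  simp_rw [vecMul_leadingBlock hW, funext_iff]
  constructor
  · rintro ⟨h0, hU⟩ i j
    induction j using Fin.cases with
    | zero => rw [Pi.single_eq_same]; exact h0 i
    | succ j =>
      rw [Pi.single_eq_of_ne (Fin.succ_ne_zero j)]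
      exact hU (show Fin.castLE i.2.le j < i from j.2)
  · intro h
    refine ⟨fun i => (h i 0).trans (Pi.single_eq_same _ _), fun i q (hqi : q < i) => ?_⟩
    exact (h i (Fin.succ ⟨q, hqi⟩)).trans (Pi.single_eq_of_ne (Fin.succ_ne_zero _) _)

theorem eq_lowerFactorInv_iff (hA : ∀ i, (leadingBlock A i).det ≠ 0)
    (hW : W.IsLowerTriangular) :
    W = lowerFactorInv A c ↔
      W *ᵥ (fun i => A i 0) = c ∧ (W * A.submatrix id Fin.succ).IsUpperTriangular := by
  rw [mulVec_eq_and_isUpperTriangular_iff hW, eq_lowerFactorInv_iff_forall_row hW]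
  exact forall_congr' fun i => (vecMul_eq_iff_eq_vecMul_inv (hA i).isUnit).symm

theorem existsUnique_lower_upper (hc : ∀ i, c i ≠ 0) (hA : ∀ i, (leadingBlock A i).det ≠ 0)
    (hÂ : ∀ k (hk : k ≤ n),
      ((A.submatrix id Fin.succ).submatrix (Fin.castLE hk) (Fin.castLE hk)).det ≠ 0) :
    ∃! LU : Matrix (Fin n) (Fin n) K × Matrix (Fin n) (Fin n) K,
      LU.1.IsLowerTriangular ∧ LU.2.IsUpperTriangular ∧
        LU.1 *ᵥ c = (fun i => A i 0) ∧ LU.1 * LU.2 = A.submatrix id Fin.succ := by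
  set R := lowerFactorInv A c
  obtain ⟨hRa, hRÂ⟩ := (eq_lowerFactorInv_iff hA lowerFactorInv_isLowerTriangular).mp rfl
  have hR : IsUnit R.det := (det_ne_zero_of_isLowerTriangular lowerFactorInv_isLowerTriangular
    fun i => diag_ne_zero_of_mulVec_eq lowerFactorInv_isLowerTriangular hRa hRÂ i (hc i)
      (hÂ i _)).isUnit
  refine ⟨(R⁻¹, R * A.submatrix id Fin.succ),
    ⟨isLowerTriangular_inv lowerFactorInv_isLowerTriangular, hRÂ, ?_, ?_⟩, ?_⟩
  · rw [← hRa, mulVec_mulVec, nonsing_inv_mul _ hR, one_mulVec]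
  · rw [← Matrix.mul_assoc, nonsing_inv_mul _ hR, Matrix.one_mul]
  rintro ⟨L, U⟩ ⟨hL, hU, hLc, hLU⟩
  have hÂn := hÂ n le_rfl
  simp only [Fin.castLE_rfl, submatrix_id_id] at hÂn
  have hLdet : IsUnit L.det := by
    rw [← hLU, det_mul] at hÂn
    exact (left_ne_zero_of_mul hÂn).isUnit
  have hLR : L⁻¹ = R := (eq_lowerFactorInv_iff hA (isLowerTriangular_inv hL)).mpr
    ⟨by rw [← hLc, mulVec_mulVec, nonsing_inv_mul _ hLdet, one_mulVec],
     by rwa [← hLU, ← Matrix.mul_assoc, nonsing_inv_mul _ hLdet, Matrix.one_mul]⟩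
  refine Prod.ext ?_ ?_
  · rw [← hLR, nonsing_inv_nonsing_inv _ hLdet]
  · rw [← hLR, ← hLU, ← Matrix.mul_assoc, nonsing_inv_mul _ hLdet, Matrix.one_mul]

end Field

variable {n : ℕ}

-- `modK' (n + 1)` with its row type `Fin (n + 1 - 1)` written as `Fin n`: instance search does
-- not see through `n + 1 - 1`, so `modK' (n + 1)` cannot be multiplied by `Fin n`-indexed matrices.
def modKSucc (n : ℕ) : Matrix (Fin n) (Fin (n + 1)) ℂ := modK' (n + 1)

abbrev modKHat (n : ℕ) : Matrix (Fin n) (Fin n) ℂ := (modKSucc n).submatrix id Fin.succ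

def alternating (n : ℕ) : Fin n → ℂ := fun k => (-1) ^ (k : ℕ)

theorem modKSucc_mulVec_apply (x : Fin (n + 1) → ℂ) (i : Fin n) :
    (modKSucc n *ᵥ x) i = x i.castSucc + x i.succ := by
  have hrow : modKSucc n i = Pi.single i.castSucc 1 + Pi.single i.succ 1 := by
    funext j
    simp only [modKSucc, modK', of_apply, Pi.add_apply, Pi.single_apply, Fin.ext_iff,
      Fin.val_castSucc, Fin.val_succ]
    split_ifs <;> simp_all
  rw [mulVec, hrow, add_dotProduct, single_one_dotProduct, single_one_dotProduct]

theorem modKSucc_mulVec_alternating : modKSucc n *ᵥ alternating (n + 1) = 0 := by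
  funext i
  simp [modKSucc_mulVec_apply, alternating, pow_succ]

theorem modKHat_mulVec_alternating : modKHat n *ᵥ alternating n = fun i => modKSucc n i 0 := by
  funext i
  have h := congrFun (modKSucc_mulVec_alternating (n := n)) i
  simp only [mulVec, dotProduct, Fin.sum_univ_succ, alternating, Fin.val_succ, Fin.val_zero,
    pow_succ, pow_zero, mul_one, mul_neg, Finset.sum_neg_distrib, Pi.zero_apply] at h
  change ∑ k : Fin n, modKSucc n i k.succ * (-1) ^ (k : ℕ) = _
  linear_combination -h

theorem modKHat_isLowerTriangular : (modKHat n).IsLowerTriangular := by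
  intro i j (hij : i < j)
  simp only [modKSucc, modK', submatrix_apply, of_apply, id, Fin.val_succ]
  rw [if_neg (by omega)]

theorem det_modKHat : (modKHat n).det = 1 := by
  rw [det_of_isLowerTriangular _ modKHat_isLowerTriangular]
  exact Finset.prod_eq_one fun i _ => by simp [modKSucc, modK']

theorem eq_mul_modKSucc_mul_blockDiagOne_iff {A : Matrix (Fin n) (Fin (n + 1)) ℂ}
    {B U : Matrix (Fin n) (Fin n) ℂ} :
    A = B * modKSucc n * blockDiagOne U ↔
      (B * modKHat n) *ᵥ alternating n = (fun i => A i 0) ∧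
        B * modKHat n * U = A.submatrix id Fin.succ := by
  have hcol : (B * modKHat n) *ᵥ alternating n =
      fun i => (B * modKSucc n * blockDiagOne U) i 0 := by
    funext i
    rw [← mulVec_mulVec, modKHat_mulVec_alternating, mul_blockDiagOne_apply_zero]
    rfl
  have hhat :
      B * modKHat n * U = (B * modKSucc n * blockDiagOne U).submatrix id Fin.succ := by
    rw [submatrix_mul_blockDiagOne]
    rfl
  rw [hcol, hhat]
  constructor
  · rintro rfl
    exact ⟨rfl, rfl⟩
  · rintro ⟨h0, hhat⟩
    ext i j
    induction j using Fin.cases with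
    | zero => exact (congrFun h0 i).symm
    | succ j => exact (congrFun₂ hhat i j).symm

theorem existsUnique_factorization (A : Matrix (Fin n) (Fin (n + 1)) ℂ)
    (hA : ∀ i, (leadingBlock A i).det ≠ 0)
    (hÂ : ∀ k (hk : k ≤ n),
      ((A.submatrix id Fin.succ).submatrix (Fin.castLE hk) (Fin.castLE hk)).det ≠ 0) :
    ∃! BC : Matrix (Fin n) (Fin n) ℂ × Matrix (Fin (n + 1)) (Fin (n + 1)) ℂ,
      BC.1.IsLowerTriangular ∧ BC.2.IsUpperTriangular ∧ BC.2 0 0 = 1 ∧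
        (∀ j ≠ 0, BC.2 0 j = 0) ∧ A = BC.1 * modKSucc n * BC.2 := by
  have hK : IsUnit (modKHat n).det := by
    rw [det_modKHat]
    exact isUnit_one
  obtain ⟨⟨L, U⟩, ⟨hL, hU, hLc, hLU⟩, huniq⟩ :=
    existsUnique_lower_upper (c := alternating n)
      (fun _ => pow_ne_zero _ (neg_ne_zero.mpr one_ne_zero)) hA hÂ
  refine ⟨(L * (modKHat n)⁻¹, blockDiagOne U),
    ⟨hL.mul (isLowerTriangular_inv modKHat_isLowerTriangular),
      blockDiagOne_isUpperTriangular hU, by simp [blockDiagOne],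
      fun j hj => by simp [blockDiagOne, hj], ?_⟩, ?_⟩
  · rw [eq_mul_modKSucc_mul_blockDiagOne_iff, nonsing_inv_mul_cancel_right _ _ hK]
    exact ⟨hLc, hLU⟩
  rintro ⟨B, C⟩ ⟨hB, hC, h00, h0, hA⟩
  dsimp only at hB hC h00 h0 hA
  have hCeq := eq_blockDiagOne hC h00 h0
  rw [hCeq, eq_mul_modKSucc_mul_blockDiagOne_iff] at hA
  obtain ⟨rfl, rfl⟩ := Prod.mk.inj <| huniq (B * modKHat n, C.submatrix Fin.succ Fin.succ)
    ⟨hB.mul modKHat_isLowerTriangular, fun i j h => hC (Fin.succ_lt_succ_iff.mpr h), hA⟩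
  rw [mul_nonsing_inv_cancel_right _ _ hK, ← hCeq]

end ModifiedCholesky

/-- **Modified Cholesky factorization for `(m-1) × m` matrices.** If `A` is a complex
`(m-1) × m` matrix with `det (A^(k)) ≠ 0` for `k = 1, …, m - 1` and `det (Â^(k)) ≠ 0`
for `k = 1, …, m - 1` (where `Â` deletes the first column of `A`), then there are a
unique `(m-1) × (m-1)` lower triangular `B` and a unique `m × m` upper triangular
`C`, with `C 0 0 = 1` and remaining first-row entries `0`, such that
`A = B * K' * C`. -/
theorem modified_cholesky_rectangular (m : ℕ) (hm : 2 ≤ m)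
    (A : Matrix (Fin (m - 1)) (Fin m) ℂ)
    (hdet : ∀ k : ℕ, 1 ≤ k → ∀ hk : k ≤ m - 1,
      (A.submatrix (Fin.castLE hk) (Fin.castLE (show k ≤ m by omega))).det ≠ 0)
    (hdet' : ∀ k : ℕ, 1 ≤ k → ∀ hk : k ≤ m - 1,
      (Matrix.of fun a b : Fin k =>
        A (Fin.castLE hk a) ⟨(b : ℕ) + 1, by have := b.isLt; omega⟩).det ≠ 0) :
    ∃! BC : Matrix (Fin (m - 1)) (Fin (m - 1)) ℂ × Matrix (Fin m) (Fin m) ℂ,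
      (∀ i j : Fin (m - 1), i < j → BC.1 i j = 0) ∧
      (∀ i j : Fin m, j < i → BC.2 i j = 0) ∧
      BC.2 ⟨0, by omega⟩ ⟨0, by omega⟩ = 1 ∧
      (∀ j : Fin m, j ≠ ⟨0, by omega⟩ → BC.2 ⟨0, by omega⟩ j = 0) ∧
      A = BC.1 * modK' m * BC.2 := by
  obtain ⟨n, rfl⟩ : ∃ n, m = n + 1 := ⟨m - 1, by omega⟩
  exact ModifiedCholesky.existsUnique_factorization A (fun i => hdet (i + 1) (by omega) i.2)
    fun k hk => k.eq_zero_or_pos.elim (fun h => by subst h; simp) fun h => hdet' k h hk
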